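/- arXiv:1908.04882 — 2 statements merged into one kernel-verified Lean document; each statement's English description precedes it below -/
import Mathlib

section
/- Let A be a skew PBW extension of R in variables x_1, …, x_n. Then for every 1 ≤ i ≤ n there exist an injective ring endomorphism σ_i : R → R and a σ_i-derivation δ_i : R → R (an additive map satisfying δ_i(rs) = σ_i(r)δ_i(s) + δ_i(r)s for all r, s ∈ R) such that x_i r = σ_i(r) x_i + δ_i(r) for every r ∈ R. -/
/-- The ordered monomial `x₁^{α₁} ⋯ xₙ^{αₙ}`. -/
def skewPBWMonomial {A : Type*} [Ring A] {n : ℕ} (x : Fin n → A) (α : Fin n → ℕ) : A :=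
  (List.ofFn fun i => x i ^ α i).prod

/-- `A` is a skew PBW extension of the subring `S` with variables `x₁, …, xₙ`:
the standard monomials form a basis of `A` as a left `S`-module, for each `i` and each
`r ∈ S ∖ {0}` there is `c ∈ S ∖ {0}` with `xᵢ r − c xᵢ ∈ S`, and for all `i, j` there is
`c ∈ S ∖ {0}` with `xⱼxᵢ − c xᵢxⱼ ∈ S + Sx₁ + ⋯ + Sxₙ`. -/
structure IsSkewPBWExt {A : Type*} [Ring A] (S : Subring A) {n : ℕ} (x : Fin n → A) : Prop where
  linearIndependent : LinearIndependent S (skewPBWMonomial x)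
  span_top : Submodule.span S (Set.range (skewPBWMonomial x)) = ⊤
  comm_coeff : ∀ (i : Fin n) (r : S), r ≠ 0 →
    ∃ c : S, c ≠ 0 ∧ x i * (r : A) - (c : A) * x i ∈ (S : Set A)
  comm_var : ∀ i j : Fin n, ∃ c : S, c ≠ 0 ∧ ∃ (r₀ : S) (r : Fin n → S),
    x j * x i - (c : A) * (x i * x j) = (r₀ : A) + ∑ k, (r k : A) * x k

lemma listProd_single {A : Type*} [Monoid A] :
    ∀ {n : ℕ} (f : Fin n → A) (i : Fin n), (∀ k, k ≠ i → f k = 1) →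
    (List.ofFn f).prod = f i := by
  intro n
  induction n with
  | zero => intro f i; exact i.elim0
  | succ m ih =>
    intro f i hf
    rw [List.ofFn_succ, List.prod_cons]
    rcases Fin.eq_zero_or_eq_succ i with rfl | ⟨j, rfl⟩
    · have h1 : (List.ofFn fun k => f k.succ).prod = 1 := by
        apply List.prod_eq_one
        intro a ha
        rw [List.mem_ofFn] at ha
        obtain ⟨k, rfl⟩ := ha
        exact hf _ (Fin.succ_ne_zero k)
      rw [h1, mul_one]
    · rw [hf 0 (Ne.symm (Fin.succ_ne_zero j)), one_mul]
      exact ih (f ∘ Fin.succ) j (fun k hk => hf _ (by simpa using hk))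

lemma skewPBWMonomial_zero {A : Type*} [Ring A] {n : ℕ} (x : Fin n → A) :
    skewPBWMonomial x 0 = 1 := by
  simp [skewPBWMonomial, List.ofFn_const]

lemma skewPBWMonomial_single {A : Type*} [Ring A] {n : ℕ} (x : Fin n → A) (i : Fin n) :
    skewPBWMonomial x (Pi.single i 1) = x i := by
  have := listProd_single (fun k => x k ^ (Pi.single i 1 : Fin n → ℕ) k) i
    (fun k hk => by simp [Pi.single_eq_of_ne hk])
  simpa [skewPBWMonomial, Pi.single_eq_same] using this

lemma skewPBW_key {A : Type*} [Ring A] (S : Subring A) {n : ℕ} (x : Fin n → A)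
    (h : LinearIndependent S (skewPBWMonomial x)) (i : Fin n) :
    ∀ a b : S, (a : A) + (b : A) * x i = 0 → a = 0 ∧ b = 0 := by
  intro a b hab
  have hne : (0 : Fin n → ℕ) ≠ Pi.single i 1 := by
    intro hEq
    have := congrFun hEq i
    simp at this
  have hinj : Function.Injective (![0, Pi.single i 1] : Fin 2 → Fin n → ℕ) := by
    intro u v huv
    fin_cases u <;> fin_cases v <;> simp_all
  have li2 := h.comp _ hinj
  rw [Fintype.linearIndependent_iff] at li2
  have hsum : ∑ j : Fin 2, (![a, b] j) • ((skewPBWMonomial x ∘ ![0, Pi.single i 1]) j) = 0 := by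
    rw [Fin.sum_univ_two]
    simp only [Matrix.cons_val_zero, Matrix.cons_val_one, Matrix.head_cons, Function.comp_apply,
      skewPBWMonomial_zero, skewPBWMonomial_single]
    simp only [Subring.smul_def, smul_eq_mul, mul_one]
    exact hab
  have h0 := li2 ![a, b] hsum
  exact ⟨by simpa using h0 0, by simpa using h0 1⟩

/-- in a skew PBW extension `A` of `R`, for every `i` there exist an
injective ring endomorphism `σᵢ : R → R` and a `σᵢ`-derivation `δᵢ : R → R` with
`xᵢ r = σᵢ(r) xᵢ + δᵢ(r)` for all `r ∈ R`. -/
theorem skewPBW_sigma_delta_exists {A : Type*} [Ring A] (S : Subring A) {n : ℕ}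
    (x : Fin n → A) (h : IsSkewPBWExt S x) :
    ∀ i : Fin n, ∃ σ : S →+* S, Function.Injective σ ∧
      ∃ δ : S →+ S,
        (∀ r s : S, δ (r * s) = σ r * δ s + δ r * s) ∧
        ∀ r : S, x i * (r : A) = (σ r : A) * x i + (δ r : A) := by
  intro i
  classical
  have key := skewPBW_key S x h.linearIndependent i
  have uniq : ∀ c s c' s' : S, (c : A) * x i + s = (c' : A) * x i + s' → c = c' ∧ s = s' := by
    intro c s c' s' hEq
    have h0 : ((s - s' : S) : A) + ((c - c' : S) : A) * x i = 0 := by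
      push_cast
      rw [sub_mul]
      rw [show ((s : A) - s') + ((c : A) * x i - (c' : A) * x i)
        = ((c : A) * x i + s) - ((c' : A) * x i + s') by abel, hEq, sub_self]
    obtain ⟨h1, h2⟩ := key _ _ h0
    exact ⟨sub_eq_zero.mp h2, sub_eq_zero.mp h1⟩
  have exist : ∀ r : S, ∃ p : S × S, x i * (r : A) = (p.1 : A) * x i + (p.2 : A) := by
    intro r
    by_cases hr : r = 0
    · exact ⟨(0, 0), by simp [hr]⟩
    · obtain ⟨c, hc, hmem⟩ := h.comm_coeff i r hr
      refine ⟨(c, ⟨x i * (r : A) - (c : A) * x i, hmem⟩), ?_⟩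
      show x i * (r : A) = (c : A) * x i + (x i * (r : A) - (c : A) * x i)
      abel
  choose p hp using exist
  set f : S → S := fun r => (p r).1 with hf
  set g : S → S := fun r => (p r).2 with hg
  have hfg : ∀ r : S, x i * (r : A) = (f r : A) * x i + (g r : A) := hp
  have char : ∀ (r c s : S), x i * (r : A) = (c : A) * x i + (s : A) → f r = c ∧ g r = s :=
    fun r c s hcs => uniq _ _ _ _ ((hfg r).symm.trans hcs)
  have hone : f 1 = 1 ∧ g 1 = 0 := char 1 1 0 (by simp)
  have hzero : f 0 = 0 ∧ g 0 = 0 := char 0 0 0 (by simp)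
  have hadd : ∀ r s : S, f (r + s) = f r + f s ∧ g (r + s) = g r + g s := by
    intro r s
    apply char
    push_cast
    rw [mul_add, hfg r, hfg s, add_mul]
    abel
  have hmul : ∀ r s : S, f (r * s) = f r * f s ∧ g (r * s) = f r * g s + g r * s := by
    intro r s
    apply char
    push_cast
    rw [← mul_assoc, hfg r, add_mul, mul_assoc, hfg s, mul_add, ← mul_assoc]
    abel
  have hne0 : ∀ r : S, r ≠ 0 → f r ≠ 0 := by
    intro r hr
    obtain ⟨c, hc, hmem⟩ := h.comm_coeff i r hr
    have : f r = c := (char r c ⟨x i * (r : A) - (c : A) * x i, hmem⟩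
      (by show x i * (r : A) = (c : A) * x i + (x i * (r : A) - (c : A) * x i); abel)).1
    rw [this]; exact hc
  let σ : S →+* S :=
    { toFun := f
      map_one' := hone.1
      map_mul' := fun r s => (hmul r s).1
      map_zero' := hzero.1
      map_add' := fun r s => (hadd r s).1 }
  let δ : S →+ S :=
    { toFun := g
      map_zero' := hzero.2
      map_add' := fun r s => (hadd r s).2 }
  refine ⟨σ, ?_, δ, fun r s => (hmul r s).2, hfg⟩
  intro a b hab
  by_contra hne
  have : f (a - b) ≠ 0 := hne0 _ (sub_ne_zero.mpr hne)
  apply this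
  have := (hadd b (a - b)).1
  rw [add_sub_cancel] at this
  have hab' : f a = f b := hab
  rw [hab'] at this
  exact (left_eq_add.mp this)
end

section
/- For every [v] ∈ E there exists a nonzero w ∈ K^n with F(v)·w = 0, unique up to a scalar multiple, and this w satisfies [w] ∈ E; moreover the induced map σ : E → E, σ([v]) := [w], is well defined and bijective, and consequently X_2 := {([v],[w]) ∈ ℙ^{n−1}(K) × ℙ^{n−1}(K) : F(v)·w = 0} = {([v], σ([v])) : [v] ∈ E}, so the projection onto the first coordinate is a bijection from X_2 onto E. -/
open Matrix

/-- Row index type for the multilinearized relations of the multiparameter quantum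
affine `n`-space: pairs `(i,j)` with `i < j`. -/
def quantumRowIdx (n : ℕ) := {p : Fin n × Fin n // p.1 < p.2}

instance (n : ℕ) : Fintype (quantumRowIdx n) := by
  unfold quantumRowIdx; infer_instance

instance (n : ℕ) : DecidableEq (quantumRowIdx n) := by
  unfold quantumRowIdx; infer_instance

/-- The `(n(n−1)/2) × n` matrix `F(v)` whose row indexed by `(i,j)`, `i < j`, has entry
`v j` in column `i`, entry `−q i j * v i` in column `j`, and zeros elsewhere. -/
def quantumMatrixFn {K : Type*} [Field K] {n : ℕ} (q : Fin n → Fin n → K)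
    (v : Fin n → K) : Matrix (quantumRowIdx n) (Fin n) K :=
  fun r k =>
    if k = r.1.1 then v r.1.2 else if k = r.1.2 then -q r.1.1 r.1.2 * v r.1.1 else 0

/-- `E ⊆ ℙ^{n−1}(K)` is the locus of `[v]` where every `n × n` minor of `F(v)`
vanishes. -/
def quantumAffineNE (K : Type*) [Field K] {n : ℕ} (q : Fin n → Fin n → K) :
    Set (Projectivization K (Fin n → K)) :=
  {p | ∀ (v : Fin n → K) (hv : v ≠ 0), Projectivization.mk K v hv = p →
    ∀ r : Fin n ↪ quantumRowIdx n, ((quantumMatrixFn q v).submatrix r id).det = 0}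

/-- `X₂ ⊆ ℙ^{n−1}(K) × ℙ^{n−1}(K)` is the set of pairs `([v],[w])` with `F(v)·w = 0`. -/
def quantumAffineNX2 (K : Type*) [Field K] {n : ℕ} (q : Fin n → Fin n → K) :
    Set (Projectivization K (Fin n → K) × Projectivization K (Fin n → K)) :=
  {pq | ∃ (v : Fin n → K) (hv : v ≠ 0) (w : Fin n → K) (hw : w ≠ 0),
    pq = (Projectivization.mk K v hv, Projectivization.mk K w hw) ∧
    (quantumMatrixFn q v) *ᵥ w = 0}

/-! The relations `v j * w i = q i j * v i * w j` force every nonzero solution `w` of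
`F(v) w = 0` to have the same support as `v`; a solution vanishing at a point of that support is
therefore zero, so the solutions form a line. If `F(v) w = 0`, then also `F(w) (w² / v) = 0`
(pointwise division, with `x / 0 = 0` off the common support), hence `[w] ∈ E`, once `E` is
identified with the `[v]` admitting a nonzero solution: a matrix with `n` columns has a nonzero
kernel iff all its `n × n` minors vanish. The relations are invariant under
`(v, w, q) ↦ (w, v, q⁻¹)`, which turns injectivity and surjectivity of `σ` into uniqueness and
existence of solutions for `q⁻¹`. -/

namespace Matrix

variable {m n K : Type*} [Fintype m] [Fintype n] [DecidableEq n] [Field K] {A : Matrix m n K}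

theorem exists_mulVec_eq_zero_iff_forall_det_submatrix_eq_zero :
    (∃ w ≠ 0, A *ᵥ w = 0) ↔ ∀ r : n ↪ m, (A.submatrix r id).det = 0 := by
  refine ⟨fun ⟨w, hw, hAw⟩ r => exists_mulVec_eq_zero_iff.mp
    ⟨w, hw, by ext i; exact congrFun hAw (r i)⟩, fun h => ?_⟩
  by_contra! hinj
  have hrank : A.rank = Fintype.card n := by
    rw [rank, LinearMap.finrank_range_of_inj, Module.finrank_fintype_fun_eq_card]
    exact LinearMap.ker_eq_bot.mp <|
      LinearMap.ker_eq_bot'.mpr fun w hw => by_contra fun hw0 => hinj w hw0 hw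
  obtain ⟨κ, a, ha, hspan, hli⟩ := exists_linearIndependent' K A.row
  have : Finite κ := Finite.of_injective a ha
  have : Fintype κ := Fintype.ofFinite κ
  have hcard : Fintype.card n = Fintype.card κ := by
    rw [← hrank, rank_eq_finrank_span_row, ← hspan, finrank_span_eq_card hli]
  let e := Fintype.equivOfCardEq hcard
  have hrows : LinearIndependent K (A.submatrix (e.toEmbedding.trans ⟨a, ha⟩) id).row :=
    hli.comp e e.injective
  exact ((isUnit_iff_isUnit_det _).mp (linearIndependent_rows_iff_isUnit.mp hrows)).ne_zero
    (h _)

end Matrix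

theorem Set.exists_bijective_eq_graph {α : Type*} {S : Set α} {R : Set (α × α)}
    (fst_mem : ∀ x ∈ R, x.1 ∈ S) (snd_mem : ∀ x ∈ R, x.2 ∈ S)
    (exists_right : ∀ a ∈ S, ∃ b, (a, b) ∈ R) (exists_left : ∀ b ∈ S, ∃ a, (a, b) ∈ R)
    (right_unique : ∀ {a b b'}, (a, b) ∈ R → (a, b') ∈ R → b = b')
    (left_unique : ∀ {a a' b}, (a, b) ∈ R → (a', b) ∈ R → a = a') :
    ∃ σ : S → S, Function.Bijective σ ∧
      (∀ a b, (a, b) ∈ R → ∀ (ha : a ∈ S) (hb : b ∈ S), σ ⟨a, ha⟩ = ⟨b, hb⟩) ∧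
      R = {x | ∃ p : S, x = ((p : α), (σ p : α))} ∧ Set.BijOn Prod.fst R S := by
  choose f hf using exists_right
  let σ : S → S := fun p => ⟨f p p.2, snd_mem _ (hf p p.2)⟩
  have hσ : ∀ a b, (a, b) ∈ R → ∀ (ha : a ∈ S) (hb : b ∈ S), σ ⟨a, ha⟩ = ⟨b, hb⟩ :=
    fun a b hab ha _ => Subtype.ext (right_unique (hf a ha) hab)
  refine ⟨σ, ⟨fun p p' h => Subtype.ext (left_unique (hf p p.2) ?_), fun b => ?_⟩, hσ, ?_,
    ⟨fst_mem, fun x hx y hy h => Prod.ext h ?_, fun a ha => ?_⟩⟩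
  · rw [show f p p.2 = f p' p'.2 from congrArg Subtype.val h]
    exact hf p' p'.2
  · obtain ⟨a, hab⟩ := exists_left b b.2
    exact ⟨⟨a, fst_mem _ hab⟩, hσ a b hab _ b.2⟩
  · ext ⟨a, b⟩
    refine ⟨fun hab => ⟨⟨a, fst_mem _ hab⟩, ?_⟩, fun ⟨p, h⟩ => h ▸ hf p p.2⟩
    rw [hσ a b hab _ (snd_mem _ hab)]
  · exact right_unique hx (h ▸ hy)
  · exact ⟨(a, f a ha), hf a ha, rfl⟩

section QuantumAffineSpace

variable {K : Type*} [Field K] {n : ℕ} {q : Fin n → Fin n → K} {v w : Fin n → K}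

theorem quantumMatrixFn_mulVec_apply (q : Fin n → Fin n → K) (v w : Fin n → K)
    (r : quantumRowIdx n) :
    (quantumMatrixFn q v *ᵥ w) r = v r.1.2 * w r.1.1 - q r.1.1 r.1.2 * v r.1.1 * w r.1.2 := by
  rw [mulVec_apply_eq_sum, Fintype.sum_eq_add r.1.1 r.1.2 r.2.ne]
  · simp only [quantumMatrixFn, ↓reduceIte, r.2.ne', neg_mul]
    ring
  · intro k hk
    simp [quantumMatrixFn, hk.1, hk.2]

theorem quantumMatrixFn_mulVec_eq_zero_iff :
    quantumMatrixFn q v *ᵥ w = 0 ↔ ∀ i j, i < j → v j * w i = q i j * v i * w j := by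
  simp only [funext_iff, quantumMatrixFn_mulVec_apply, Pi.zero_apply, sub_eq_zero]
  exact ⟨fun h i j hij => h ⟨(i, j), hij⟩, fun h r => h _ _ r.2⟩

theorem quantumMatrixFn_smul (q : Fin n → Fin n → K) (a : K) (v : Fin n → K) :
    quantumMatrixFn q (a • v) = a • quantumMatrixFn q v := by
  ext r k
  simp only [Matrix.smul_apply, quantumMatrixFn, Pi.smul_apply, smul_eq_mul]
  split_ifs <;> ring

theorem quantumMatrixFn_mulVec_eq_zero_comm (hq : ∀ i j : Fin n, i < j → q i j ≠ 0) :
    quantumMatrixFn q v *ᵥ w = 0 ↔ quantumMatrixFn q⁻¹ w *ᵥ v = 0 := by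
  simp only [quantumMatrixFn_mulVec_eq_zero_iff, Pi.inv_apply]
  refine forall₃_congr fun i j hij => ?_
  rw [mul_assoc, mul_assoc, eq_inv_mul_iff_mul_eq₀ (hq i j hij), eq_comm]
  ring_nf

theorem apply_eq_zero_of_quantumMatrixFn_mulVec_eq_zero
    (hq : ∀ i j : Fin n, i < j → q i j ≠ 0) (hker : quantumMatrixFn q v *ᵥ w = 0)
    {m c : Fin n} (hm : v m ≠ 0) (hc : v c = 0) : w c = 0 := by
  rw [quantumMatrixFn_mulVec_eq_zero_iff] at hker
  rcases lt_trichotomy c m with h | rfl | h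
  · simpa [hc, hm] using hker c m h
  · exact absurd hc hm
  · simpa [hc, hm, hq m c h] using hker m c h

theorem apply_eq_zero_iff_of_quantumMatrixFn_mulVec_eq_zero
    (hq : ∀ i j : Fin n, i < j → q i j ≠ 0) (hv : v ≠ 0) (hw : w ≠ 0)
    (hker : quantumMatrixFn q v *ᵥ w = 0) (c : Fin n) : v c = 0 ↔ w c = 0 := by
  obtain ⟨m, hm⟩ := Function.ne_iff.mp hv
  obtain ⟨m', hm'⟩ := Function.ne_iff.mp hw
  exact ⟨apply_eq_zero_of_quantumMatrixFn_mulVec_eq_zero hq hker hm,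
    apply_eq_zero_of_quantumMatrixFn_mulVec_eq_zero (fun i j h => inv_ne_zero (hq i j h))
      ((quantumMatrixFn_mulVec_eq_zero_comm hq).mp hker) hm'⟩

theorem exists_eq_smul_of_quantumMatrixFn_mulVec_eq_zero
    (hq : ∀ i j : Fin n, i < j → q i j ≠ 0) (hv : v ≠ 0) (hw : w ≠ 0)
    (hker : quantumMatrixFn q v *ᵥ w = 0) {w' : Fin n → K}
    (hker' : quantumMatrixFn q v *ᵥ w' = 0) : ∃ c : K, w' = c • w := by
  obtain ⟨m, hm⟩ := Function.ne_iff.mp hw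
  have hvm : v m ≠ 0 :=
    mt (apply_eq_zero_iff_of_quantumMatrixFn_mulVec_eq_zero hq hv hw hker m).mp hm
  set u := w m • w' - w' m • w
  have hu : u = 0 := by
    by_contra hu
    refine hvm ((apply_eq_zero_iff_of_quantumMatrixFn_mulVec_eq_zero hq hv hu ?_ m).mpr ?_)
    · simp [u, mulVec_sub, mulVec_smul, hker, hker']
    · simp [u, mul_comm]
  refine ⟨(w m)⁻¹ * w' m, ?_⟩
  rw [← smul_smul, ← sub_eq_zero.mp hu, inv_smul_smul₀ hm]

theorem quantumMatrixFn_mulVec_sq_div_eq_zero (hker : quantumMatrixFn q v *ᵥ w = 0)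
    (hsupp : ∀ c, v c = 0 → w c = 0) : quantumMatrixFn q w *ᵥ (w ^ 2 / v) = 0 := by
  rw [quantumMatrixFn_mulVec_eq_zero_iff] at hker ⊢
  intro i j hij
  simp only [Pi.div_apply, Pi.pow_apply]
  by_cases hi : v i = 0
  · simp [hi, hsupp i hi]
  by_cases hj : v j = 0
  · simp [hj, hsupp j hj]
  field_simp
  linear_combination (w i * w j) * hker i j hij

theorem sq_div_ne_zero (hw : w ≠ 0) (hsupp : ∀ c, v c = 0 → w c = 0) : w ^ 2 / v ≠ 0 := by
  obtain ⟨c, hc⟩ := Function.ne_iff.mp hw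
  exact Function.ne_iff.mpr ⟨c, div_ne_zero (pow_ne_zero 2 hc) (mt (hsupp c) hc)⟩

open Projectivization
open scoped LinearAlgebra.Projectivization

theorem mk_mem_quantumAffineNE_iff (hv : v ≠ 0) :
    mk K v hv ∈ quantumAffineNE K q ↔ ∃ w ≠ 0, quantumMatrixFn q v *ᵥ w = 0 := by
  refine ⟨fun hE => exists_mulVec_eq_zero_iff_forall_det_submatrix_eq_zero.mpr (hE v hv rfl),
    fun ⟨w, hw, hker⟩ v' hv' hmk => ?_⟩
  obtain ⟨a, rfl⟩ := (mk_eq_mk_iff' K v' v hv' hv).mp hmk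
  refine exists_mulVec_eq_zero_iff_forall_det_submatrix_eq_zero.mp ⟨w, hw, ?_⟩
  rw [quantumMatrixFn_smul, smul_mulVec, hker, smul_zero]

theorem mk_mem_quantumAffineNE_of_quantumMatrixFn_mulVec_eq_zero
    (hq : ∀ i j : Fin n, i < j → q i j ≠ 0) (hv : v ≠ 0) (hw : w ≠ 0)
    (hker : quantumMatrixFn q v *ᵥ w = 0) : mk K w hw ∈ quantumAffineNE K q := by
  have hsupp c := (apply_eq_zero_iff_of_quantumMatrixFn_mulVec_eq_zero hq hv hw hker c).mp
  exact (mk_mem_quantumAffineNE_iff hw).mpr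
    ⟨w ^ 2 / v, sq_div_ne_zero hw hsupp, quantumMatrixFn_mulVec_sq_div_eq_zero hker hsupp⟩

theorem mk_mem_quantumAffineNX2_iff (hv : v ≠ 0) (hw : w ≠ 0) :
    (mk K v hv, mk K w hw) ∈ quantumAffineNX2 K q ↔ quantumMatrixFn q v *ᵥ w = 0 := by
  refine ⟨fun ⟨v', hv', w', hw', hmk, hker⟩ => ?_, fun hker => ⟨v, hv, w, hw, rfl, hker⟩⟩
  obtain ⟨hmkv, hmkw⟩ := Prod.ext_iff.mp hmk
  obtain ⟨a, rfl⟩ := (mk_eq_mk_iff' K v v' hv hv').mp hmkv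
  obtain ⟨b, rfl⟩ := (mk_eq_mk_iff' K w w' hw hw').mp hmkw
  rw [quantumMatrixFn_smul, smul_mulVec, mulVec_smul, hker, smul_zero, smul_zero]

theorem swap_mem_quantumAffineNX2_inv (hq : ∀ i j : Fin n, i < j → q i j ≠ 0)
    {x : ℙ K (Fin n → K) × ℙ K (Fin n → K)} :
    x.swap ∈ quantumAffineNX2 K q⁻¹ ↔ x ∈ quantumAffineNX2 K q := by
  obtain ⟨p, p'⟩ := x
  induction p with | h v hv => ?_
  induction p' with | h w hw => ?_
  rw [Prod.swap_prod_mk, mk_mem_quantumAffineNX2_iff, mk_mem_quantumAffineNX2_iff,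
    quantumMatrixFn_mulVec_eq_zero_comm hq]

theorem fst_mem_quantumAffineNE {x : ℙ K (Fin n → K) × ℙ K (Fin n → K)}
    (hx : x ∈ quantumAffineNX2 K q) : x.1 ∈ quantumAffineNE K q := by
  obtain ⟨v, hv, w, hw, rfl, hker⟩ := hx
  exact (mk_mem_quantumAffineNE_iff hv).mpr ⟨w, hw, hker⟩

theorem snd_mem_quantumAffineNE (hq : ∀ i j : Fin n, i < j → q i j ≠ 0)
    {x : ℙ K (Fin n → K) × ℙ K (Fin n → K)}
    (hx : x ∈ quantumAffineNX2 K q) : x.2 ∈ quantumAffineNE K q := by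
  obtain ⟨v, hv, w, hw, rfl, hker⟩ := hx
  exact mk_mem_quantumAffineNE_of_quantumMatrixFn_mulVec_eq_zero hq hv hw hker

theorem exists_mem_quantumAffineNX2_right {p : ℙ K (Fin n → K)}
    (hp : p ∈ quantumAffineNE K q) :
    ∃ p', (p, p') ∈ quantumAffineNX2 K q := by
  induction p with | h v hv => ?_
  obtain ⟨w, hw, hker⟩ := (mk_mem_quantumAffineNE_iff hv).mp hp
  exact ⟨mk K w hw, (mk_mem_quantumAffineNX2_iff hv hw).mpr hker⟩

theorem quantumAffineNX2_right_unique (hq : ∀ i j : Fin n, i < j → q i j ≠ 0)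
    {p p' p'' : ℙ K (Fin n → K)} (h' : (p, p') ∈ quantumAffineNX2 K q)
    (h'' : (p, p'') ∈ quantumAffineNX2 K q) : p' = p'' := by
  induction p with | h v hv => ?_
  induction p' with | h w hw => ?_
  induction p'' with | h w' hw' => ?_
  rw [mk_mem_quantumAffineNX2_iff] at h' h''
  obtain ⟨c, rfl⟩ := exists_eq_smul_of_quantumMatrixFn_mulVec_eq_zero hq hv hw h' h''
  exact ((mk_eq_mk_iff' K _ _ hw' hw).mpr ⟨c, rfl⟩).symm

theorem mem_quantumAffineNE_inv (hq : ∀ i j : Fin n, i < j → q i j ≠ 0)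
    {p : ℙ K (Fin n → K)} (hp : p ∈ quantumAffineNE K q) : p ∈ quantumAffineNE K q⁻¹ := by
  obtain ⟨p', hp'⟩ := exists_mem_quantumAffineNX2_right hp
  exact snd_mem_quantumAffineNE (fun i j h => inv_ne_zero (hq i j h))
    ((swap_mem_quantumAffineNX2_inv hq).mpr hp')

theorem exists_mem_quantumAffineNX2_left (hq : ∀ i j : Fin n, i < j → q i j ≠ 0)
    {p' : ℙ K (Fin n → K)} (hp' : p' ∈ quantumAffineNE K q) :
    ∃ p, (p, p') ∈ quantumAffineNX2 K q := by
  obtain ⟨p, hp⟩ := exists_mem_quantumAffineNX2_right (mem_quantumAffineNE_inv hq hp')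
  exact ⟨p, (swap_mem_quantumAffineNX2_inv hq).mp hp⟩

theorem quantumAffineNX2_left_unique (hq : ∀ i j : Fin n, i < j → q i j ≠ 0)
    {p p'' p' : ℙ K (Fin n → K)} (h : (p, p') ∈ quantumAffineNX2 K q)
    (h'' : (p'', p') ∈ quantumAffineNX2 K q) : p = p'' :=
  quantumAffineNX2_right_unique (fun i j h => inv_ne_zero (hq i j h))
    ((swap_mem_quantumAffineNX2_inv hq).mpr h) ((swap_mem_quantumAffineNX2_inv hq).mpr h'')

end QuantumAffineSpace

theorem quantumAffineN_sigma_bijective_general {K : Type*} [Field K] {n : ℕ}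
    (q : Fin n → Fin n → K) (hq : ∀ i j : Fin n, i < j → q i j ≠ 0) :
    (∀ (v : Fin n → K) (hv : v ≠ 0), Projectivization.mk K v hv ∈ quantumAffineNE K q →
      ∃ (w : Fin n → K) (hw : w ≠ 0), (quantumMatrixFn q v) *ᵥ w = 0 ∧
        (∀ w' : Fin n → K, (quantumMatrixFn q v) *ᵥ w' = 0 → ∃ c : K, w' = c • w) ∧
        Projectivization.mk K w hw ∈ quantumAffineNE K q) ∧
    ∃ σ : quantumAffineNE K q → quantumAffineNE K q,
      Function.Bijective σ ∧
      (∀ (v : Fin n → K) (hv : v ≠ 0) (w : Fin n → K) (hw : w ≠ 0),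
        (quantumMatrixFn q v) *ᵥ w = 0 →
        ∀ (hvE : Projectivization.mk K v hv ∈ quantumAffineNE K q)
          (hwE : Projectivization.mk K w hw ∈ quantumAffineNE K q),
          σ ⟨Projectivization.mk K v hv, hvE⟩ = ⟨Projectivization.mk K w hw, hwE⟩) ∧
      quantumAffineNX2 K q =
        {pq | ∃ p : quantumAffineNE K q,
          pq = ((p : Projectivization K (Fin n → K)),
                (σ p : Projectivization K (Fin n → K)))} ∧
      Set.BijOn Prod.fst (quantumAffineNX2 K q) (quantumAffineNE K q) := by
  refine ⟨fun v hv hE => ?_, ?_⟩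
  · obtain ⟨w, hw, hker⟩ := (mk_mem_quantumAffineNE_iff hv).mp hE
    exact ⟨w, hw, hker, fun _ => exists_eq_smul_of_quantumMatrixFn_mulVec_eq_zero hq hv hw hker,
      mk_mem_quantumAffineNE_of_quantumMatrixFn_mulVec_eq_zero hq hv hw hker⟩
  obtain ⟨σ, hbij, hσ, hgraph, hfst⟩ := Set.exists_bijective_eq_graph
    (fun _ => fst_mem_quantumAffineNE) (fun _ => snd_mem_quantumAffineNE hq)
    (fun _ => exists_mem_quantumAffineNX2_right) (fun _ => exists_mem_quantumAffineNX2_left hq)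
    (quantumAffineNX2_right_unique hq) (quantumAffineNX2_left_unique hq)
  exact ⟨σ, hbij, fun v hv w hw hker => hσ _ _ ((mk_mem_quantumAffineNX2_iff hv hw).mpr hker),
    hgraph, hfst⟩

/-- for every `[v] ∈ E` there is a nonzero `w` with `F(v)·w = 0`, unique
up to scalar, and `[w] ∈ E`; the induced map `σ : E → E` is well defined and bijective,
`X₂ = {([v], σ([v])) : [v] ∈ E}`, and the first projection is a bijection from `X₂`
onto `E`. -/
theorem quantumAffineN_sigma_bijective {K : Type*} [Field K] {n : ℕ} (hn : 2 ≤ n)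
    (q : Fin n → Fin n → K) (hq : ∀ i j : Fin n, i < j → q i j ≠ 0) :
    (∀ (v : Fin n → K) (hv : v ≠ 0), Projectivization.mk K v hv ∈ quantumAffineNE K q →
      ∃ (w : Fin n → K) (hw : w ≠ 0), (quantumMatrixFn q v) *ᵥ w = 0 ∧
        (∀ w' : Fin n → K, (quantumMatrixFn q v) *ᵥ w' = 0 → ∃ c : K, w' = c • w) ∧
        Projectivization.mk K w hw ∈ quantumAffineNE K q) ∧
    ∃ σ : quantumAffineNE K q → quantumAffineNE K q,
      Function.Bijective σ ∧
      (∀ (v : Fin n → K) (hv : v ≠ 0) (w : Fin n → K) (hw : w ≠ 0),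
        (quantumMatrixFn q v) *ᵥ w = 0 →
        ∀ (hvE : Projectivization.mk K v hv ∈ quantumAffineNE K q)
          (hwE : Projectivization.mk K w hw ∈ quantumAffineNE K q),
          σ ⟨Projectivization.mk K v hv, hvE⟩ = ⟨Projectivization.mk K w hw, hwE⟩) ∧
      quantumAffineNX2 K q =
        {pq | ∃ p : quantumAffineNE K q,
          pq = ((p : Projectivization K (Fin n → K)),
                (σ p : Projectivization K (Fin n → K)))} ∧
      Set.BijOn Prod.fst (quantumAffineNX2 K q) (quantumAffineNE K q) :=
  quantumAffineN_sigma_bijective_general q hq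
end
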